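/- arXiv:1208.6392 — 4 statements merged into one kernel-verified Lean document; each statement's English description precedes it below -/
import Mathlib

section
/- On the interior of the triangular region T₁ = {(α,r)∈[0,1]²: (α/r)D > D*}, the function F(α,r) = αS^in + (1-α)·λ(((1-α)/(1-r))D) satisfies F_r > 0, hence F restricted to T₁ has no interior critical points and its extrema lie on the boundary of T₁. -/
/-!
Along a horizontal line `α = const`, the argument `((1 - α) / (1 - r)) D` of `λ` is increasing in
`r`, so `F_r = (1 - α)² D λ'(·) / (1 - r)² > 0`. The only thing to check is that this argument
stays in `[0, D*)`, where `λ' > 0`: in `T₁` we have `D* r < α D`, hence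
`(1 - α) D < D* - D* r = D* (1 - r)` because `D < D*`.
-/

open Set

lemma mem_Ioo_prod_of_mem_interior_unitSquare_inter {s : Set (ℝ × ℝ)} {p : ℝ × ℝ}
    (hp : p ∈ interior {q : ℝ × ℝ | q ∈ Icc (0:ℝ) 1 ×ˢ Icc (0:ℝ) 1 ∧ q ∈ s}) :
    p ∈ Ioo (0:ℝ) 1 ×ˢ Ioo (0:ℝ) 1 := by
  have hsub : interior {q : ℝ × ℝ | q ∈ Icc (0:ℝ) 1 ×ˢ Icc (0:ℝ) 1 ∧ q ∈ s} ⊆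
      interior (Icc (0:ℝ) 1 ×ˢ Icc (0:ℝ) 1) :=
    interior_mono fun _ hq => hq.1
  rw [interior_prod_eq, interior_Icc] at hsub
  exact hsub hp

lemma div_one_sub_mul_mem_Ico {α r D Dstar : ℝ} (hα : α < 1) (hr : r ∈ Ioo (0:ℝ) 1)
    (hD : 0 < D) (hDDstar : D < Dstar) (hwash : Dstar < α / r * D) :
    (1 - α) / (1 - r) * D ∈ Ico 0 Dstar := by
  have h1r : 0 < 1 - r := sub_pos.mpr hr.2
  have hDr : Dstar * r < α * D := by
    rwa [div_mul_eq_mul_div, lt_div_iff₀ hr.1] at hwash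
  refine ⟨by have := sub_pos.mpr hα; positivity, ?_⟩
  rw [div_mul_eq_mul_div, div_lt_iff₀ h1r]
  nlinarith

lemma hasDerivAt_comp_div_one_sub {lam : ℝ → ℝ} {a c D r : ℝ} (hr : r ≠ 1)
    (hlam : DifferentiableAt ℝ lam (c / (1 - r) * D)) :
    HasDerivAt (fun ρ => a + c * lam (c / (1 - ρ) * D))
      (c * (deriv lam (c / (1 - r) * D) * (c / (1 - r) ^ 2 * D))) r := by
  have hinner : HasDerivAt (fun ρ => c / (1 - ρ) * D) (c / (1 - r) ^ 2 * D) r := by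
    have h := (((hasDerivAt_id r).const_sub 1).inv (sub_ne_zero.mpr hr.symm)).const_mul c
    simpa only [div_eq_mul_inv, Pi.inv_apply, id_eq, neg_neg, one_mul] using h.mul_const D
  exact ((hlam.hasDerivAt.comp r hinner).const_mul c).const_add a

/-- On the interior of T₁ = {(α,r)∈[0,1]² : (α/r)D > D*}, the function
F(α,r) = α·S^in + (1-α)·λ(((1-α)/(1-r))·D) satisfies F_r > 0, hence F has no
interior critical point in T₁. -/
theorem stmt_6 (lam : ℝ → ℝ) (D Dstar Sin : ℝ) (F : ℝ → ℝ → ℝ) (T1 : Set (ℝ × ℝ))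
    (hD : 0 < D) (hDDstar : D < Dstar)
    (hlamdiff : ∀ x ∈ Set.Ico (0:ℝ) Dstar, DifferentiableAt ℝ lam x)
    (hlam' : ∀ x ∈ Set.Ico (0:ℝ) Dstar, 0 < deriv lam x)
    (hT1 : T1 = {p : ℝ × ℝ | p ∈ (Set.Icc (0:ℝ) 1) ×ˢ (Set.Icc (0:ℝ) 1) ∧
          Dstar < (p.1 / p.2) * D})
    (hF : ∀ α r : ℝ, F α r = α * Sin + (1 - α) * lam (((1 - α) / (1 - r)) * D)) :
    ∀ p : ℝ × ℝ, p ∈ interior T1 →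
      0 < deriv (fun ρ => F p.1 ρ) p.2 ∧ ¬ deriv (fun ρ => F p.1 ρ) p.2 = 0 := by
  rintro ⟨α, r⟩ hp
  subst hT1
  obtain ⟨⟨-, hα1⟩, hr⟩ := mem_Ioo_prod_of_mem_interior_unitSquare_inter hp
  have hwash : Dstar < α / r * D := (interior_subset hp).2
  have hx := div_one_sub_mul_mem_Ico hα1 hr hD hDDstar hwash
  have hderiv := hasDerivAt_comp_div_one_sub (a := α * Sin) hr.2.ne (hlamdiff _ hx)
  simp only [← hF] at hderiv
  rw [hderiv.deriv]
  have h1α : 0 < 1 - α := sub_pos.mpr hα1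
  have h1r : 0 < 1 - r := sub_pos.mpr hr.2
  have hpos := hlam' _ hx
  have hF_r_pos : 0 < (1 - α) * (deriv lam ((1 - α) / (1 - r) * D) *
      ((1 - α) / (1 - r) ^ 2 * D)) := by positivity
  exact ⟨hF_r_pos, hF_r_pos.ne'⟩
end

section
/- The function α ↦ F(α,0) = αS^in + (1-α)·λ((1-α)D) is strictly convex on [0,1], with F_α(α,0) = S^in − λ((1-α)D) − (1-α)D·λ'((1-α)D) and F_αα(α,0) = 2D·λ'((1-α)D) + (1-α)D²·λ''((1-α)D) > 0. -/
/-!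
The second derivative is `2Dλ'((1-α)D) + (1-α)D²λ''((1-α)D)`: the first term is positive since
`λ` is increasing and the second is nonnegative since `λ` is convex and `α ≤ 1`. A function
continuous on `[0,1]` whose second derivative is positive on `(0,1)` is strictly convex.
-/

open Set Filter Topology

noncomputable def bypassOutflow (lam : ℝ → ℝ) (D Sin α : ℝ) : ℝ :=
  α * Sin + (1 - α) * lam ((1 - α) * D)

noncomputable def bypassOutflowDeriv (lam : ℝ → ℝ) (D Sin α : ℝ) : ℝ :=
  Sin - lam ((1 - α) * D) - (1 - α) * D * deriv lam ((1 - α) * D)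

section

variable {lam : ℝ → ℝ} {D Sin α : ℝ}

lemma one_sub_mul_mem_Icc (hD : 0 ≤ D) (hα : α ∈ Icc (0 : ℝ) 1) :
    (1 - α) * D ∈ Icc 0 D :=
  ⟨by nlinarith [hα.2], by nlinarith [hα.1]⟩

lemma hasDerivAt_one_sub_mul (D α : ℝ) : HasDerivAt (fun a : ℝ => (1 - a) * D) (-D) α := by
  simpa using ((hasDerivAt_id α).const_sub 1).mul_const D

lemma hasDerivAt_bypassOutflow (hlam : DifferentiableAt ℝ lam ((1 - α) * D)) :
    HasDerivAt (bypassOutflow lam D Sin) (bypassOutflowDeriv lam D Sin α) α := by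
  have hcomp := hlam.hasDerivAt.comp α (hasDerivAt_one_sub_mul D α)
  refine (((hasDerivAt_id α).mul_const Sin).add
    (((hasDerivAt_id α).const_sub 1).mul hcomp)).congr_deriv ?_
  simp only [bypassOutflowDeriv, id, Function.comp_apply]
  ring

lemma hasDerivAt_bypassOutflowDeriv (hlam : DifferentiableAt ℝ lam ((1 - α) * D))
    (hlam' : DifferentiableAt ℝ (deriv lam) ((1 - α) * D)) :
    HasDerivAt (bypassOutflowDeriv lam D Sin)
      (2 * D * deriv lam ((1 - α) * D) + (1 - α) * D ^ 2 * deriv (deriv lam) ((1 - α) * D)) α := by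
  have hinner := hasDerivAt_one_sub_mul D α
  have hcomp := hlam.hasDerivAt.comp α hinner
  have hcomp' := hlam'.hasDerivAt.comp α hinner
  refine ((hcomp.const_sub Sin).sub (hinner.mul hcomp')).congr_deriv ?_
  simp only [Function.comp_apply]
  ring

lemma deriv_bypassOutflow_eventuallyEq (hD : 0 ≤ D)
    (hlam : ∀ x ∈ Icc 0 D, DifferentiableAt ℝ lam x) (hα : α ∈ Ioo (0 : ℝ) 1) :
    deriv (bypassOutflow lam D Sin) =ᶠ[𝓝 α] bypassOutflowDeriv lam D Sin := by
  filter_upwards [Ioo_mem_nhds hα.1 hα.2] with x hx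
  exact (hasDerivAt_bypassOutflow (hlam _ (one_sub_mul_mem_Icc hD (Ioo_subset_Icc_self hx)))).deriv

lemma deriv_deriv_bypassOutflow (hD : 0 ≤ D)
    (hlam : ∀ x ∈ Icc 0 D, DifferentiableAt ℝ lam x)
    (hlam' : ∀ x ∈ Icc 0 D, DifferentiableAt ℝ (deriv lam) x) (hα : α ∈ Ioo (0 : ℝ) 1) :
    deriv (deriv (bypassOutflow lam D Sin)) α
      = 2 * D * deriv lam ((1 - α) * D) + (1 - α) * D ^ 2 * deriv (deriv lam) ((1 - α) * D) := by
  have hmem := one_sub_mul_mem_Icc hD (Ioo_subset_Icc_self hα)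
  rw [(deriv_bypassOutflow_eventuallyEq hD hlam hα).deriv_eq]
  exact (hasDerivAt_bypassOutflowDeriv (hlam _ hmem) (hlam' _ hmem)).deriv

end

/-- α ↦ F(α,0) = α·S^in + (1-α)·λ((1-α)D) is strictly convex on [0,1], with the
given first and (positive) second derivative formulas. -/
theorem stmt_7 (lam : ℝ → ℝ) (D Sin : ℝ)
    (hD : 0 < D)
    (hlamdiff : ∀ x ∈ Set.Icc (0:ℝ) D, DifferentiableAt ℝ lam x)
    (hlamdiff2 : ∀ x ∈ Set.Icc (0:ℝ) D, DifferentiableAt ℝ (deriv lam) x)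
    (hlam' : ∀ x ∈ Set.Icc (0:ℝ) D, 0 < deriv lam x)
    (hlam'' : ∀ x ∈ Set.Icc (0:ℝ) D, 0 ≤ deriv (deriv lam) x) :
    StrictConvexOn ℝ (Set.Icc (0:ℝ) 1)
      (fun α => α * Sin + (1 - α) * lam ((1 - α) * D)) ∧
    (∀ α ∈ Set.Ioo (0:ℝ) 1,
      deriv (fun a => a * Sin + (1 - a) * lam ((1 - a) * D)) α
        = Sin - lam ((1 - α) * D) - (1 - α) * D * deriv lam ((1 - α) * D)) ∧
    (∀ α ∈ Set.Ioo (0:ℝ) 1,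
      deriv (fun a => deriv (fun b => b * Sin + (1 - b) * lam ((1 - b) * D)) a) α
        = 2 * D * deriv lam ((1 - α) * D)
          + (1 - α) * D ^ 2 * deriv (deriv lam) ((1 - α) * D) ∧
      0 < 2 * D * deriv lam ((1 - α) * D)
          + (1 - α) * D ^ 2 * deriv (deriv lam) ((1 - α) * D)) := by
  have hmem : ∀ α ∈ Icc (0 : ℝ) 1, (1 - α) * D ∈ Icc 0 D := fun α => one_sub_mul_mem_Icc hD.le
  have hF'' : ∀ α ∈ Ioo (0 : ℝ) 1,
      deriv (deriv (bypassOutflow lam D Sin)) α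
        = 2 * D * deriv lam ((1 - α) * D) + (1 - α) * D ^ 2 * deriv (deriv lam) ((1 - α) * D) ∧
      0 < 2 * D * deriv lam ((1 - α) * D)
        + (1 - α) * D ^ 2 * deriv (deriv lam) ((1 - α) * D) := by
    intro α hα
    have hx := hmem α (Ioo_subset_Icc_self hα)
    refine ⟨deriv_deriv_bypassOutflow hD.le hlamdiff hlamdiff2 hα,
      add_pos_of_pos_of_nonneg (by have := hlam' _ hx; positivity) ?_⟩
    exact mul_nonneg (mul_nonneg (sub_nonneg.2 hα.2.le) (sq_nonneg D)) (hlam'' _ hx)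
  refine ⟨strictConvexOn_of_deriv2_pos (convex_Icc 0 1) ?_ ?_,
    fun α hα => (hasDerivAt_bypassOutflow (hlamdiff _ (hmem α (Ioo_subset_Icc_self hα)))).deriv,
    hF''⟩
  · exact fun α hα =>
      (hasDerivAt_bypassOutflow (hlamdiff _ (hmem α hα))).continuousAt.continuousWithinAt
  · intro α hα
    rw [interior_Icc] at hα
    exact (hF'' α hα).2.trans_eq (hF'' α hα).1.symm
end

section
/- Under the two-species crossing assumptions with D = D̄ < min(D₁*, D₂*), for every α∈(0,1) there exist configurations (α̃,r̃)∈(0,1)² arbitrarily close to (α,α) such that G(α̃,r̃) < min(F₁(α̃,r̃), F₂(α̃,r̃)), i.e., exhibiting transgressive overyielding. -/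
set_option maxHeartbeats 1000000


/-- When D = D̄ (the crossing dilution rate), for every α∈(0,1) there exist
configurations (α̃,r̃)∈(0,1)² arbitrarily close to (α,α) exhibiting transgressive
overyielding: G(α̃,r̃) < min(F₁(α̃,r̃), F₂(α̃,r̃)). -/
theorem stmt_13 (f1 f2 : ℝ → ℝ) (Sin Sbar Dbar : ℝ)
    (hs1 : ContDiff ℝ (⊤ : ℕ∞) f1) (hs2 : ContDiff ℝ (⊤ : ℕ∞) f2)
    (h10 : f1 0 = 0) (h20 : f2 0 = 0)
    (h1' : ∀ S ≥ (0:ℝ), 0 < deriv f1 S) (h2' : ∀ S ≥ (0:ℝ), 0 < deriv f2 S)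
    (h1'' : ∀ S ≥ (0:ℝ), deriv (deriv f1) S ≤ 0)
    (h2'' : ∀ S ≥ (0:ℝ), deriv (deriv f2) S ≤ 0)
    (hSbar : Sbar ∈ Set.Ioo 0 Sin)
    (hcross1 : ∀ S ∈ Set.Ioo (0:ℝ) Sbar, f2 S < f1 S)
    (hcross2 : ∀ S ∈ Set.Ioi Sbar, f1 S < f2 S)
    (hDbar1 : Dbar = f1 Sbar) (hDbar2 : Dbar = f2 Sbar)
    (D : ℝ) (hD : D = Dbar) (hDpos : 0 < D)
    (hDwash : D < min (f1 Sin) (f2 Sin))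
    (lam1 lam2 : ℝ → ℝ)
    (hlam1 : ∀ d, lam1 d = if d ≤ f1 Sin then Function.invFunOn f1 (Set.Ici 0) d else Sin)
    (hlam2 : ∀ d, lam2 d = if d ≤ f2 Sin then Function.invFunOn f2 (Set.Ici 0) d else Sin)
    (F1 F2 G : ℝ → ℝ → ℝ)
    (hF1 : ∀ α r, F1 α r =
      α * lam1 ((α / r) * D) + (1 - α) * lam1 (((1 - α) / (1 - r)) * D))
    (hF2 : ∀ α r, F2 α r =
      α * lam2 ((α / r) * D) + (1 - α) * lam2 (((1 - α) / (1 - r)) * D))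
    (hG : ∀ α r, G α r =
      α * lam1 ((α / r) * D) + (1 - α) * lam2 (((1 - α) / (1 - r)) * D)) :
    ∀ α ∈ Set.Ioo (0:ℝ) 1, ∀ ε > (0:ℝ),
      ∃ αt ∈ Set.Ioo (0:ℝ) 1, ∃ rt ∈ Set.Ioo (0:ℝ) 1,
        |αt - α| < ε ∧ |rt - α| < ε ∧
        G αt rt < min (F1 αt rt) (F2 αt rt) := by
  intro α hα ε hε
  obtain ⟨hα0, hα1⟩ := hα
  have hSin0 : (0:ℝ) < Sin := lt_trans hSbar.1 hSbar.2
  have hSbar0 : (0:ℝ) < Sbar := hSbar.1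
  set M := min (f1 Sin) (f2 Sin) with hMdef
  have hDM : D < M := hDwash
  have hM1 : M ≤ f1 Sin := min_le_left _ _
  have hM2 : M ≤ f2 Sin := min_le_right _ _
  have hM0 : (0:ℝ) < M := lt_trans hDpos hDM
  have hDbarM : Dbar < M := hD ▸ hDM
  have mono1 : StrictMonoOn f1 (Set.Ici 0) :=
    strictMonoOn_of_deriv_pos (convex_Ici 0) hs1.continuous.continuousOn
      (fun x hx => h1' x (le_of_lt (by simpa using hx)))
  have mono2 : StrictMonoOn f2 (Set.Ici 0) :=
    strictMonoOn_of_deriv_pos (convex_Ici 0) hs2.continuous.continuousOn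
      (fun x hx => h2' x (le_of_lt (by simpa using hx)))
  have key : ∀ (f lam : ℝ → ℝ), Continuous f → StrictMonoOn f (Set.Ici 0) → f 0 = 0 →
      (∀ d, lam d = if d ≤ f Sin then Function.invFunOn f (Set.Ici 0) d else Sin) →
      ∀ d, 0 ≤ d → d ≤ f Sin → f (lam d) = d ∧ lam d ∈ Set.Ici (0:ℝ) := by
    intro f lam hc hm hf0 hlam d hd0 hdS
    have hiv : d ∈ f '' Set.Icc 0 Sin := by
      apply intermediate_value_Icc (le_of_lt hSin0) hc.continuousOn
      rw [hf0]; exact ⟨hd0, hdS⟩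
    obtain ⟨x, hx, hfx⟩ := hiv
    have hex : ∃ a ∈ Set.Ici (0:ℝ), f a = d := ⟨x, hx.1, hfx⟩
    rw [hlam d, if_pos hdS]
    exact ⟨Function.invFunOn_eq hex, Function.invFunOn_mem hex⟩
  have key1 := key f1 lam1 hs1.continuous mono1 h10 hlam1
  have key2 := key f2 lam2 hs2.continuous mono2 h20 hlam2
  have hSbarmem : Sbar ∈ Set.Ici (0:ℝ) := Set.mem_Ici.mpr hSbar0.le
  -- comparison for d below Dbar
  have cmp1 : ∀ d, 0 < d → d < Dbar → lam1 d < lam2 d := by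
    intro d hd0 hdD
    have hdS1 : d ≤ f1 Sin := le_of_lt (lt_of_lt_of_le (lt_trans hdD hDbarM) hM1)
    have hdS2 : d ≤ f2 Sin := le_of_lt (lt_of_lt_of_le (lt_trans hdD hDbarM) hM2)
    obtain ⟨he1, hp1⟩ := key1 d hd0.le hdS1
    obtain ⟨he2, hp2⟩ := key2 d hd0.le hdS2
    have hlt : lam1 d < Sbar :=
      (mono1.lt_iff_lt hp1 hSbarmem).mp (by rw [he1, ← hDbar1]; exact hdD)
    have hgt : 0 < lam1 d :=
      (mono1.lt_iff_lt Set.self_mem_Ici hp1).mp (by rw [h10, he1]; exact hd0)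
    have hcr : f2 (lam1 d) < f1 (lam1 d) := hcross1 _ ⟨hgt, hlt⟩
    exact (mono2.lt_iff_lt hp1 hp2).mp (by rw [he2]; exact lt_of_lt_of_eq hcr he1)
  -- comparison for d above Dbar
  have cmp2 : ∀ d, Dbar < d → d < M → lam2 d < lam1 d := by
    intro d hdD hdM
    have hd0 : 0 < d := lt_trans (hD ▸ hDpos) hdD
    have hdS1 : d ≤ f1 Sin := le_of_lt (lt_of_lt_of_le hdM hM1)
    have hdS2 : d ≤ f2 Sin := le_of_lt (lt_of_lt_of_le hdM hM2)
    obtain ⟨he1, hp1⟩ := key1 d hd0.le hdS1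
    obtain ⟨he2, hp2⟩ := key2 d hd0.le hdS2
    have hgt : Sbar < lam2 d :=
      (mono2.lt_iff_lt hSbarmem hp2).mp (by rw [he2, ← hDbar2]; exact hdD)
    have hcr : f1 (lam2 d) < f2 (lam2 d) := hcross2 _ hgt
    exact (mono1.lt_iff_lt hp2 hp1).mp (by rw [he1]; exact lt_of_lt_of_eq hcr he2)
  -- choose the perturbation
  set δ : ℝ := min (ε/2) ((1-α)*(M-D)/(2*M)) with hδdef
  have hδ0 : 0 < δ := lt_min (half_pos hε) (div_pos (mul_pos (by linarith) (by linarith)) (by linarith))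
  have hδle : δ ≤ (1-α)*(M-D)/(2*M) := min_le_right _ _
  have hδε : δ ≤ ε/2 := min_le_left _ _
  have h2M : (0:ℝ) < 2*M := by linarith
  have hMδ : δ * (2*M) ≤ (1-α)*(M-D) := (le_div_iff₀ h2M).mp hδle
  have hδlt1α : δ < 1 - α := by nlinarith
  set rt : ℝ := α + δ with hrtdef
  have hrt0 : 0 < rt := by simp only [hrtdef]; linarith
  have hrt1 : rt < 1 := by simp only [hrtdef]; linarith
  have h1rt : 0 < 1 - rt := by linarith
  -- d1 bounds
  set d1 : ℝ := (α / rt) * D with hd1def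
  have hd1pos : 0 < d1 := mul_pos (div_pos hα0 hrt0) hDpos
  have hd1lt : d1 < Dbar := by
    rw [← hD]
    have h : α / rt < 1 := (div_lt_one hrt0).mpr (by simp only [hrtdef]; linarith)
    nlinarith
  -- d2 bounds
  set d2 : ℝ := ((1 - α) / (1 - rt)) * D with hd2def
  have hd2gt : Dbar < d2 := by
    rw [← hD]
    have h : (1:ℝ) < (1-α)/(1-rt) := (one_lt_div h1rt).mpr (by simp only [hrtdef]; linarith)
    nlinarith
  have hd2lt : d2 < M := by
    rw [hd2def, div_mul_eq_mul_div, div_lt_iff₀ h1rt]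
    simp only [hrtdef]
    nlinarith
  -- conclude
  refine ⟨α, ⟨hα0, hα1⟩, rt, ⟨hrt0, hrt1⟩, by rw [sub_self, abs_zero]; exact hε, ?_, ?_⟩
  · have : |rt - α| = δ := by
      rw [hrtdef]; simp [abs_of_pos hδ0]
    rw [this]; linarith
  · have hc1 := cmp1 d1 hd1pos hd1lt
    have hc2 := cmp2 d2 hd2gt hd2lt
    have hGF1 : G α rt < F1 α rt := by
      rw [hG, hF1, ← hd1def, ← hd2def]
      nlinarith [mul_lt_mul_of_pos_left hc2 (by linarith : (0:ℝ) < 1 - α)]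
    have hGF2 : G α rt < F2 α rt := by
      rw [hG, hF2, ← hd1def, ← hd2def]
      nlinarith [mul_lt_mul_of_pos_left hc1 hα0]
    exact lt_min hGF1 hGF2
end

section
/- Under the two-species crossing assumptions with D ≠ D̄ and D, D̄ < min(D₁*, D₂*), there exists (α,r)∈(0,1)² with (α/r)D < D̄ < ((1-α)/(1-r))D < min(D₁*,D₂*), and any such configuration (α,r) corresponds to transgressive overyielding: G(α,r) < min(F₁(α,r), F₂(α,r)). -/
private lemma mono_aux {f : ℝ → ℝ} (hs : ContDiff ℝ (⊤ : ℕ∞) f)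
    (h' : ∀ S ≥ (0:ℝ), 0 < deriv f S) : StrictMonoOn f (Set.Ici 0) := by
  apply strictMonoOn_of_deriv_pos (convex_Ici 0) hs.continuous.continuousOn
  intro x hx
  rw [interior_Ici] at hx
  exact h' x hx.le

private lemma inv_aux {f : ℝ → ℝ} (hs : ContDiff ℝ (⊤ : ℕ∞) f) (h0 : f 0 = 0)
    {Sin : ℝ} (hSin : 0 < Sin) {d : ℝ} (hd0 : 0 < d) (hd : d ≤ f Sin) :
    Function.invFunOn f (Set.Ici 0) d ∈ Set.Ici (0:ℝ) ∧
      f (Function.invFunOn f (Set.Ici 0) d) = d := by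
  have hmem : d ∈ Set.Icc (f 0) (f Sin) := by rw [h0]; exact ⟨hd0.le, hd⟩
  obtain ⟨S, hS, hfS⟩ :=
    intermediate_value_Icc hSin.le (hs.continuous.continuousOn) hmem
  have hex : ∃ a ∈ Set.Ici (0:ℝ), f a = d := ⟨S, hS.1, hfS⟩
  exact ⟨Function.invFunOn_mem hex, Function.invFunOn_eq hex⟩

/-- When D ≠ D̄, there exists (α,r)∈(0,1)² with (α/r)D < D̄ < ((1-α)/(1-r))D
< min(D₁*,D₂*), and any such configuration exhibits transgressive overyielding. -/
theorem stmt_14 (f1 f2 : ℝ → ℝ) (Sin Sbar Dbar : ℝ)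
    (hs1 : ContDiff ℝ (⊤ : ℕ∞) f1) (hs2 : ContDiff ℝ (⊤ : ℕ∞) f2)
    (h10 : f1 0 = 0) (h20 : f2 0 = 0)
    (h1' : ∀ S ≥ (0:ℝ), 0 < deriv f1 S) (h2' : ∀ S ≥ (0:ℝ), 0 < deriv f2 S)
    (h1'' : ∀ S ≥ (0:ℝ), deriv (deriv f1) S ≤ 0)
    (h2'' : ∀ S ≥ (0:ℝ), deriv (deriv f2) S ≤ 0)
    (hSbar : Sbar ∈ Set.Ioo 0 Sin)
    (hcross1 : ∀ S ∈ Set.Ioo (0:ℝ) Sbar, f2 S < f1 S)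
    (hcross2 : ∀ S ∈ Set.Ioi Sbar, f1 S < f2 S)
    (hDbar1 : Dbar = f1 Sbar) (hDbar2 : Dbar = f2 Sbar)
    (D : ℝ) (hD : D ≠ Dbar) (hDpos : 0 < D)
    (hDwash : D < min (f1 Sin) (f2 Sin))
    (hDbarwash : Dbar < min (f1 Sin) (f2 Sin))
    (lam1 lam2 : ℝ → ℝ)
    (hlam1 : ∀ d, lam1 d = if d ≤ f1 Sin then Function.invFunOn f1 (Set.Ici 0) d else Sin)
    (hlam2 : ∀ d, lam2 d = if d ≤ f2 Sin then Function.invFunOn f2 (Set.Ici 0) d else Sin)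
    (F1 F2 G : ℝ → ℝ → ℝ)
    (hF1 : ∀ α r, F1 α r =
      α * lam1 ((α / r) * D) + (1 - α) * lam1 (((1 - α) / (1 - r)) * D))
    (hF2 : ∀ α r, F2 α r =
      α * lam2 ((α / r) * D) + (1 - α) * lam2 (((1 - α) / (1 - r)) * D))
    (hG : ∀ α r, G α r =
      α * lam1 ((α / r) * D) + (1 - α) * lam2 (((1 - α) / (1 - r)) * D)) :
    (∃ α ∈ Set.Ioo (0:ℝ) 1, ∃ r ∈ Set.Ioo (0:ℝ) 1,
      (α / r) * D < Dbar ∧ Dbar < ((1 - α) / (1 - r)) * D ∧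
      ((1 - α) / (1 - r)) * D < min (f1 Sin) (f2 Sin)) ∧
    (∀ α ∈ Set.Ioo (0:ℝ) 1, ∀ r ∈ Set.Ioo (0:ℝ) 1,
      (α / r) * D < Dbar → Dbar < ((1 - α) / (1 - r)) * D →
      ((1 - α) / (1 - r)) * D < min (f1 Sin) (f2 Sin) →
      G α r < min (F1 α r) (F2 α r)) := by
  have mono1 := mono_aux hs1 h1'
  have mono2 := mono_aux hs2 h2'
  have hSbar0 : (0:ℝ) < Sbar := hSbar.1
  have hSin0 : (0:ℝ) < Sin := hSbar0.trans hSbar.2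
  have hDbarpos : 0 < Dbar := by
    rw [hDbar1, ← h10]
    exact mono1 (Set.mem_Ici.mpr (le_refl (0:ℝ))) hSbar0.le hSbar0
  set m := min (f1 Sin) (f2 Sin) with hm
  constructor
  · -- existence
    have hmaxm : max D Dbar < m := max_lt hDwash hDbarwash
    set c := (max D Dbar + m) / 2 with hc
    have hDc : D < c := by
      have := le_max_left D Dbar
      simp only [hc]; linarith
    have hDbarc : Dbar < c := by
      have := le_max_right D Dbar
      simp only [hc]; linarith
    have hcm : c < m := by simp only [hc]; linarith
    have hcpos : 0 < c := hDpos.trans hDc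
    set r0 := 1 - D / c with hr0def
    have hr0 : 0 < r0 := by
      have : D / c < 1 := (div_lt_one hcpos).mpr hDc
      simp only [hr0def]; linarith
    set α := min (1/2) (r0 * Dbar / (2 * D)) with hαdef
    have hαpos : 0 < α := lt_min (by norm_num) (div_pos (mul_pos hr0 hDbarpos) (by positivity))
    have hα1 : α < 1 := lt_of_le_of_lt (min_le_left _ _) (by norm_num)
    set r := 1 - (1 - α) * D / c with hrdef
    have hr_gt : r0 < r := by
      have h1 : α * (D / c) > 0 := by positivity
      simp only [hrdef, hr0def]
      have : (1 - α) * D / c = D / c - α * (D / c) := by ring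
      linarith
    have hrpos : 0 < r := hr0.trans hr_gt
    have hr1 : r < 1 := by
      have : 0 < (1 - α) * D / c := div_pos (mul_pos (by linarith) hDpos) hcpos
      simp only [hrdef]; linarith
    refine ⟨α, ⟨hαpos, hα1⟩, r, ⟨hrpos, hr1⟩, ?_, ?_, ?_⟩
    · -- (α/r)*D < Dbar
      have h1 : α / r < α / r0 := by
        exact div_lt_div_of_pos_left hαpos hr0 hr_gt
      have h2 : α / r0 ≤ Dbar / (2 * D) := by
        rw [div_le_div_iff₀ hr0 (by positivity)]
        have := min_le_right (1/2) (r0 * Dbar / (2 * D))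
        rw [← hαdef] at this
        calc α * (2 * D) ≤ (r0 * Dbar / (2 * D)) * (2 * D) := by
              apply mul_le_mul_of_nonneg_right this (by positivity)
          _ = Dbar * r0 := by field_simp
      have : α / r * D < Dbar / (2 * D) * D := by
        apply mul_lt_mul_of_pos_right (lt_of_lt_of_le h1 h2) hDpos
      have heq : Dbar / (2 * D) * D = Dbar / 2 := by field_simp
      rw [heq] at this
      linarith
    · -- Dbar < ((1-α)/(1-r))*D
      have h1r : 1 - r = (1 - α) * D / c := by simp [hrdef]
      have hne : (1:ℝ) - α ≠ 0 := by linarith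
      have : (1 - α) / (1 - r) * D = c := by
        rw [h1r]; field_simp
      rw [this]; exact hDbarc
    · have h1r : 1 - r = (1 - α) * D / c := by simp [hrdef]
      have hne : (1:ℝ) - α ≠ 0 := by linarith
      have : (1 - α) / (1 - r) * D = c := by
        rw [h1r]; field_simp
      rw [this]; exact hcm
  · -- overyielding
    rintro α ⟨hα0, hα1⟩ r ⟨hr0, hr1⟩ h1 h2 h3
    set d1 := (α / r) * D with hd1def
    set d2 := ((1 - α) / (1 - r)) * D with hd2def
    have hd1pos : 0 < d1 := by
      apply mul_pos (div_pos hα0 hr0) hDpos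
    have hd2pos : 0 < d2 := hDbarpos.trans h2
    have hd1f1 : d1 ≤ f1 Sin := le_of_lt (lt_of_lt_of_le (h1.trans_le hDbarwash.le) (min_le_left _ _))
    have hd1f2 : d1 ≤ f2 Sin := le_of_lt (lt_of_lt_of_le (h1.trans_le hDbarwash.le) (min_le_right _ _))
    have hd2f1 : d2 ≤ f1 Sin := le_of_lt (lt_of_lt_of_le h3 (min_le_left _ _))
    have hd2f2 : d2 ≤ f2 Sin := le_of_lt (lt_of_lt_of_le h3 (min_le_right _ _))
    have ha1 := inv_aux hs1 h10 hSin0 hd1pos hd1f1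
    have ha2 := inv_aux hs1 h10 hSin0 hd2pos hd2f1
    have hb1 := inv_aux hs2 h20 hSin0 hd1pos hd1f2
    have hb2 := inv_aux hs2 h20 hSin0 hd2pos hd2f2
    set a1 := Function.invFunOn f1 (Set.Ici 0) d1
    set a2 := Function.invFunOn f1 (Set.Ici 0) d2
    set b1 := Function.invFunOn f2 (Set.Ici 0) d1
    set b2 := Function.invFunOn f2 (Set.Ici 0) d2
    have hlam1d1 : lam1 d1 = a1 := by rw [hlam1, if_pos hd1f1]
    have hlam1d2 : lam1 d2 = a2 := by rw [hlam1, if_pos hd2f1]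
    have hlam2d1 : lam2 d1 = b1 := by rw [hlam2, if_pos hd1f2]
    have hlam2d2 : lam2 d2 = b2 := by rw [hlam2, if_pos hd2f2]
    -- Claim A : a1 < b1
    have hA : a1 < b1 := by
      have ha1Sbar : a1 < Sbar := by
        have : f1 a1 < f1 Sbar := by rw [ha1.2, ← hDbar1]; exact h1
        exact (mono1.lt_iff_lt ha1.1 hSbar0.le).mp this
      have ha1pos : 0 < a1 := by
        have : f1 0 < f1 a1 := by rw [h10, ha1.2]; exact hd1pos
        exact (mono1.lt_iff_lt (Set.mem_Ici.mpr (le_refl (0:ℝ))) ha1.1).mp this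
      have : f2 a1 < f2 b1 := by
        rw [hb1.2]
        exact lt_of_lt_of_eq (hcross1 a1 ⟨ha1pos, ha1Sbar⟩) ha1.2
      exact (mono2.lt_iff_lt ha1.1 hb1.1).mp this
    -- Claim B : b2 < a2
    have hB : b2 < a2 := by
      have hb2Sbar : Sbar < b2 := by
        have : f2 Sbar < f2 b2 := by rw [hb2.2, ← hDbar2]; exact h2
        exact (mono2.lt_iff_lt hSbar0.le hb2.1).mp this
      have : f1 b2 < f1 a2 := by
        rw [ha2.2]
        exact lt_of_lt_of_eq (hcross2 b2 hb2Sbar) hb2.2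
      exact (mono1.lt_iff_lt hb2.1 ha2.1).mp this
    rw [hG, hF1, hF2, ← hd1def, ← hd2def, hlam1d1, hlam1d2, hlam2d1, hlam2d2]
    refine lt_min ?_ ?_
    · have := mul_lt_mul_of_pos_left hB (by linarith : (0:ℝ) < 1 - α)
      linarith
    · have := mul_lt_mul_of_pos_left hA hα0
      linarith
end
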